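/- Let x₀(t) = σ√2·sech(t) with σ ∈ {+1, −1}, the parametrization of the right (σ = +1) or left (σ = −1) homoclinic loop of ẍ − x + x³ = 0, and let ẋ₀ denote its derivative. Then for all p₁, p₂ ∈ ℝ the autonomous Melnikov integral satisfies ∫_{−∞}^{∞} ẋ₀(t)²·(p₁ + p₂·x₀(t) − x₀(t)²) dt = 2·( (2/3)p₁ + σ·(√2π/8)p₂ − 8/15 ). -/

import Mathlib

/-!
Since σ² = 1, we have ẋ₀² = 2 sinh² t / cosh⁴ t and x₀² = 2 / cosh² t, so the integrand is a linear
combination of sinh² t / coshⁿ t for n = 4, 5, 6. These have the odd antiderivatives tanh³/3,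
(tanh·sech − 2 tanh·sech³ + arctan ∘ sinh)/8 and tanh³/3 − tanh⁵/5, so each integral over ℝ is
twice the limit at +∞ of its antiderivative: 2/3, π/8 and 4/15 respectively.
-/

noncomputable def xhom (σ : ℝ) (t : ℝ) : ℝ := σ * Real.sqrt 2 * (1 / Real.cosh t)

open Real Filter Topology MeasureTheory

theorem integral_eq_two_smul_of_odd_of_hasDerivAt {E : Type*} [NormedAddCommGroup E]
    [NormedSpace ℝ E] [CompleteSpace E] {F f : ℝ → E} {L : E}
    (hodd : ∀ x, F (-x) = -F x) (hderiv : ∀ x, HasDerivAt F (f x) x) (hf : Integrable f)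
    (htop : Tendsto F atTop (𝓝 L)) : ∫ x, f x = (2 : ℝ) • L := by
  have hbot : Tendsto F atBot (𝓝 (-L)) :=
    (htop.comp tendsto_neg_atBot_atTop).neg.congr fun x => by simp [hodd]
  rw [integral_of_hasDerivAt_of_tendsto hderiv hf hbot htop, two_smul, sub_neg_eq_add]

namespace Real

theorem one_add_sq_le_cosh_sq (t : ℝ) : 1 + t ^ 2 ≤ cosh t ^ 2 := by
  have : t ^ 2 ≤ sinh t ^ 2 := by
    rw [← sq_abs t, ← sq_abs (sinh t), abs_sinh]
    exact pow_le_pow_left₀ (abs_nonneg t) (self_le_sinh_iff.mpr (abs_nonneg t)) 2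
  linarith [cosh_sq t]

theorem tendsto_sinh_atTop : Tendsto sinh atTop atTop :=
  tendsto_atTop_mono' atTop ((eventually_ge_atTop 0).mono fun _ hx => self_le_sinh_iff.mpr hx)
    tendsto_id

theorem tendsto_cosh_atTop : Tendsto cosh atTop atTop :=
  tendsto_atTop_mono (fun x => (sinh_lt_cosh x).le) tendsto_sinh_atTop

theorem tendsto_tanh_atTop : Tendsto tanh atTop (𝓝 1) := by
  have htanh : tanh = fun t => 1 - exp (-t) / cosh t := funext fun t => by
    rw [tanh_eq_sinh_div_cosh, ← cosh_sub_sinh]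
    field_simp [(cosh_pos t).ne']
    ring
  rw [htanh]
  simpa using tendsto_const_nhds.sub (tendsto_exp_neg_atTop_nhds_zero.div_atTop tendsto_cosh_atTop)

theorem hasDerivAt_tanh (t : ℝ) : HasDerivAt tanh (cosh t ^ 2)⁻¹ t := by
  have h := (hasDerivAt_sinh t).div (hasDerivAt_cosh t) (cosh_pos t).ne'
  rw [show tanh = sinh / cosh from funext fun x => tanh_eq_sinh_div_cosh x]
  refine h.congr_deriv ?_
  rw [← sq, ← sq, cosh_sq t]
  ring

theorem sinh_sq_div_cosh_pow_le {n : ℕ} (hn : 4 ≤ n) (t : ℝ) :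
    sinh t ^ 2 / cosh t ^ n ≤ (1 + t ^ 2)⁻¹ := by
  have hc : 1 ≤ cosh t := one_le_cosh t
  calc sinh t ^ 2 / cosh t ^ n ≤ cosh t ^ 2 / cosh t ^ 4 :=
        div_le_div₀ (by positivity) (by linarith [cosh_sq t]) (by positivity)
          (pow_le_pow_right₀ hc hn)
    _ = (cosh t ^ 2)⁻¹ := by field_simp
    _ ≤ (1 + t ^ 2)⁻¹ := inv_anti₀ (by positivity) (one_add_sq_le_cosh_sq t)

theorem integrable_sinh_sq_div_cosh_pow {n : ℕ} (hn : 4 ≤ n) :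
    Integrable fun t => sinh t ^ 2 / cosh t ^ n := by
  refine integrable_inv_one_add_sq.mono' ?_ (Eventually.of_forall fun t => ?_)
  · exact (continuous_sinh.pow 2 |>.div (continuous_cosh.pow n)
      fun t => pow_ne_zero _ (cosh_pos t).ne').aestronglyMeasurable
  · rw [Real.norm_of_nonneg (by positivity)]
    exact sinh_sq_div_cosh_pow_le hn t

theorem integral_sinh_sq_div_cosh_pow_four : ∫ t, sinh t ^ 2 / cosh t ^ 4 = 2 / 3 := by
  have hderiv (t : ℝ) : HasDerivAt (fun t => tanh t ^ 3 / 3) (sinh t ^ 2 / cosh t ^ 4) t := by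
    refine (((hasDerivAt_tanh t).pow 3).div_const 3).congr_deriv ?_
    norm_num [tanh_eq_sinh_div_cosh]
    field_simp
  rw [integral_eq_two_smul_of_odd_of_hasDerivAt (fun x => by simp [tanh_neg]; ring) hderiv
    (integrable_sinh_sq_div_cosh_pow le_rfl) ((tendsto_tanh_atTop.pow 3).div_const 3)]
  norm_num

theorem integral_sinh_sq_div_cosh_pow_five : ∫ t, sinh t ^ 2 / cosh t ^ 5 = π / 8 := by
  have hderiv (t : ℝ) : HasDerivAt
      (fun t => (tanh t / cosh t - 2 * tanh t / cosh t ^ 3 + arctan (sinh t)) / 8)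
      (sinh t ^ 2 / cosh t ^ 5) t := by
    have hc := (cosh_pos t).ne'
    have h₁ := (hasDerivAt_tanh t).div (hasDerivAt_cosh t) hc
    have h₂ := ((hasDerivAt_tanh t).const_mul 2).div ((hasDerivAt_cosh t).pow 3) (pow_ne_zero 3 hc)
    have h₃ := (hasDerivAt_sinh t).arctan
    refine (((h₁.sub h₂).add h₃).div_const 8).congr_deriv ?_
    norm_num [tanh_eq_sinh_div_cosh]
    field_simp
    rw [show cosh t ^ 6 = (cosh t ^ 2) ^ 3 by ring, cosh_sq]
    ring
  have harctan : Tendsto (fun t => arctan (sinh t)) atTop (𝓝 (π / 2)) :=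
    (tendsto_nhds_of_tendsto_nhdsWithin tendsto_arctan_atTop).comp tendsto_sinh_atTop
  have hcosh_cube : Tendsto (fun t => cosh t ^ 3) atTop atTop :=
    (tendsto_pow_atTop three_ne_zero).comp tendsto_cosh_atTop
  have hlim := (((tendsto_tanh_atTop.div_atTop tendsto_cosh_atTop).sub
    ((tendsto_tanh_atTop.const_mul 2).div_atTop hcosh_cube)).add harctan).div_const 8
  rw [integral_eq_two_smul_of_odd_of_hasDerivAt (fun x => ?_) hderiv
    (integrable_sinh_sq_div_cosh_pow (by norm_num)) hlim]
  · simp only [smul_eq_mul]; ring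
  · simp only [tanh_neg, cosh_neg, sinh_neg, arctan_neg]; ring

theorem integral_sinh_sq_div_cosh_pow_six : ∫ t, sinh t ^ 2 / cosh t ^ 6 = 4 / 15 := by
  have hderiv (t : ℝ) : HasDerivAt (fun t => tanh t ^ 3 / 3 - tanh t ^ 5 / 5)
      (sinh t ^ 2 / cosh t ^ 6) t := by
    refine ((((hasDerivAt_tanh t).pow 3).div_const 3).sub
      (((hasDerivAt_tanh t).pow 5).div_const 5)).congr_deriv ?_
    norm_num [tanh_eq_sinh_div_cosh]
    field_simp
    rw [cosh_sq t]
    ring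
  rw [integral_eq_two_smul_of_odd_of_hasDerivAt (fun x => by simp [tanh_neg]; ring) hderiv
    (integrable_sinh_sq_div_cosh_pow (by norm_num))
    (((tendsto_tanh_atTop.pow 3).div_const 3).sub ((tendsto_tanh_atTop.pow 5).div_const 5))]
  norm_num

end Real

theorem hasDerivAt_xhom (σ t : ℝ) :
    HasDerivAt (xhom σ) (-(σ * √2) * sinh t / cosh t ^ 2) t := by
  have h := ((hasDerivAt_cosh t).inv (cosh_pos t).ne').const_mul (σ * √2)
  unfold xhom
  simp only [one_div]
  exact h.congr_deriv (by ring)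

theorem melnikov_integrand_eq {σ : ℝ} (hσ : σ ^ 2 = 1) (p₁ p₂ t : ℝ) :
    deriv (xhom σ) t ^ 2 * (p₁ + p₂ * xhom σ t - xhom σ t ^ 2) =
      2 * p₁ * (sinh t ^ 2 / cosh t ^ 4) + 2 * √2 * σ * p₂ * (sinh t ^ 2 / cosh t ^ 5)
        - 4 * (sinh t ^ 2 / cosh t ^ 6) := by
  have hsqrt : √2 ^ 2 = 2 := sq_sqrt zero_le_two
  rw [(hasDerivAt_xhom σ t).deriv, xhom]
  field_simp
  rw [hσ, hsqrt]
  ring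

/-- The autonomous Melnikov integral along the homoclinic loop:
∫ ẋ₀²·(p₁ + p₂x₀ − x₀²) dt = 2·((2/3)p₁ + σ(√2π/8)p₂ − 8/15). -/
theorem melnikov_autonomous (σ : ℝ) (hσ : σ = 1 ∨ σ = -1) (p₁ p₂ : ℝ) :
    ∫ t : ℝ, (deriv (xhom σ) t) ^ 2 * (p₁ + p₂ * xhom σ t - (xhom σ t) ^ 2)
      = 2 * ((2/3) * p₁ + σ * (Real.sqrt 2 * Real.pi / 8) * p₂ - 8/15) := by
  have hσ2 : σ ^ 2 = 1 := by rcases hσ with rfl | rfl <;> norm_num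
  have h₄ := integrable_sinh_sq_div_cosh_pow (le_refl 4)
  have h₅ := integrable_sinh_sq_div_cosh_pow (by norm_num : 4 ≤ 5)
  have h₆ := integrable_sinh_sq_div_cosh_pow (by norm_num : 4 ≤ 6)
  have h₄₅ : Integrable fun t =>
      2 * p₁ * (sinh t ^ 2 / cosh t ^ 4) + 2 * √2 * σ * p₂ * (sinh t ^ 2 / cosh t ^ 5) :=
    (h₄.const_mul _).add (h₅.const_mul _)
  simp_rw [melnikov_integrand_eq hσ2]
  rw [integral_sub h₄₅ (h₆.const_mul _), integral_add (h₄.const_mul _) (h₅.const_mul _),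
    integral_const_mul, integral_const_mul, integral_const_mul, integral_sinh_sq_div_cosh_pow_four,
    integral_sinh_sq_div_cosh_pow_five, integral_sinh_sq_div_cosh_pow_six]
  ring
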